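/- arXiv:1903.00825 — 2 statements merged into one kernel-verified Lean document; each statement's English description precedes it below -/
import Mathlib

section
/- Let k ≥ 2 be an integer and let w₁, w₂ be nonzero vectors in ℝ^k such that the angle between w₁ and w₂ is at least α for some α ∈ [0, π], and ‖w₁‖/‖w₂‖ ≤ L for some L ≥ 1. Then ‖w₁ + w₂‖ ≤ (1 - α²/(16L))‖w₁‖ + ‖w₂‖. -/
/-!
Jordan's inequality gives `cos θ ≤ 1 - α²/8` for the angle `θ ≥ α`, so with `ε = α²/(16L)` the
square `‖w₁ + w₂‖²` falls short of `(‖w₁‖ + ‖w₂‖)²` by at least `4εL‖w₁‖‖w₂‖`. Since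
`‖w₁‖ ≤ L‖w₂‖`, this deficit pays for shrinking `‖w₁‖` by the factor `1 - ε`.
-/

open InnerProductGeometry Real

lemma Real.cos_le_one_sub_sq_div_eight {x : ℝ} (hx₀ : 0 ≤ x) (hx : x ≤ π) :
    cos x ≤ 1 - x ^ 2 / 8 := by
  have hJordan := cos_le_one_sub_mul_cos_sq (abs_le.mpr ⟨by linarith [pi_pos], hx⟩)
  have hπ : x ^ 2 / 8 ≤ 2 / π ^ 2 * x ^ 2 := by
    rw [div_mul_eq_mul_div, div_le_div_iff₀ (by norm_num) (by positivity)]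
    have hπ_sq : π ^ 2 ≤ 16 := by nlinarith [pi_pos, pi_le_four]
    nlinarith [mul_le_mul_of_nonneg_left hπ_sq (sq_nonneg x)]
  linarith

section InnerProductSpace

variable {E : Type*} [NormedAddCommGroup E] [InnerProductSpace ℝ E]

lemma norm_add_le_of_inner_le {x y : E} {ε L : ℝ} (hε₀ : 0 ≤ ε) (hε₁ : ε ≤ 1) (hL : 1 ≤ L)
    (hxy : ‖x‖ ≤ L * ‖y‖) (hinner : inner ℝ x y ≤ (1 - 2 * ε * L) * (‖x‖ * ‖y‖)) :
    ‖x + y‖ ≤ (1 - ε) * ‖x‖ + ‖y‖ := by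
  have hx := norm_nonneg x
  have hy := norm_nonneg y
  have hsq : ‖x + y‖ ^ 2 ≤ ((1 - ε) * ‖x‖ + ‖y‖) ^ 2 := by
    rw [norm_add_sq_real]
    -- `ε ‖x‖² ≤ ε L ‖x‖ ‖y‖` and `ε ‖x‖ ‖y‖ ≤ ε L ‖x‖ ‖y‖` absorb the two extra terms.
    have hx_sq : ε * ‖x‖ * ‖x‖ ≤ ε * ‖x‖ * (L * ‖y‖) := by gcongr
    have hxy_le : ε * (‖x‖ * ‖y‖) ≤ ε * L * (‖x‖ * ‖y‖) := by
      nlinarith [mul_nonneg hε₀ (mul_nonneg hx hy)]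
    nlinarith [sq_nonneg (ε * ‖x‖)]
  exact (pow_le_pow_iff_left₀ (norm_nonneg _) (by nlinarith) two_ne_zero).mp hsq

theorem norm_add_le_of_le_angle {x y : E} (hy : y ≠ 0) {α L : ℝ} (hα : 0 ≤ α) (hL : 1 ≤ L)
    (hangle : α ≤ angle x y) (hratio : ‖x‖ / ‖y‖ ≤ L) :
    ‖x + y‖ ≤ (1 - α ^ 2 / (16 * L)) * ‖x‖ + ‖y‖ := by
  have hαπ : α ≤ π := hangle.trans (angle_le_pi x y)
  have hL₀ : 0 < L := by linarith
  have hxy : ‖x‖ ≤ L * ‖y‖ := (div_le_iff₀ (norm_pos_iff.mpr hy)).mp hratio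
  have hcos : cos (angle x y) ≤ 1 - α ^ 2 / 8 :=
    (cos_le_cos_of_nonneg_of_le_pi hα (angle_le_pi x y) hangle).trans
      (cos_le_one_sub_sq_div_eight hα hαπ)
  apply norm_add_le_of_inner_le (by positivity) _ hL hxy
  · have hcoeff : 1 - 2 * (α ^ 2 / (16 * L)) * L = 1 - α ^ 2 / 8 := by
      field_simp
      ring
    rw [hcoeff, ← cos_angle_mul_norm_mul_norm]
    exact mul_le_mul_of_nonneg_right hcos (by positivity)
  · rw [div_le_one (by positivity)]
    nlinarith [pi_le_four, mul_le_mul hαπ hαπ hα pi_pos.le]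

end InnerProductSpace

theorem stmt0_general (k : ℕ)
    (w₁ w₂ : EuclideanSpace ℝ (Fin k)) (hw₂ : w₂ ≠ 0)
    (α L : ℝ) (hα0 : 0 ≤ α) (hL : 1 ≤ L)
    (hangle : α ≤ InnerProductGeometry.angle w₁ w₂) (hratio : ‖w₁‖ / ‖w₂‖ ≤ L) :
    ‖w₁ + w₂‖ ≤ (1 - α ^ 2 / (16 * L)) * ‖w₁‖ + ‖w₂‖ :=
  norm_add_le_of_le_angle hw₂ hα0 hL hangle hratio

theorem stmt0 (k : ℕ) (hk : 2 ≤ k)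
    (w₁ w₂ : EuclideanSpace ℝ (Fin k)) (hw₁ : w₁ ≠ 0) (hw₂ : w₂ ≠ 0)
    (α L : ℝ) (hα0 : 0 ≤ α) (hαπ : α ≤ Real.pi) (hL : 1 ≤ L)
    (hangle : α ≤ InnerProductGeometry.angle w₁ w₂) (hratio : ‖w₁‖ / ‖w₂‖ ≤ L) :
    ‖w₁ + w₂‖ ≤ (1 - α ^ 2 / (16 * L)) * ‖w₁‖ + ‖w₂‖ :=
  stmt0_general k w₁ w₂ hw₂ α L hα0 hL hangle hratio
end

section
/- Let H be a complex Hilbert space, I a finite nonempty index set of size n, (U_i)_{i∈I} linear isometries of H, and (w_i)_{i∈I} positive reals with w_i ≤ C·w_j for all i, j ∈ I, for some C ≥ 1. Let φ ∈ H with ‖φ‖ = 1, and suppose there exist i₀, j₀ ∈ I and ε ∈ (0,1) such that Re⟨U_{j₀}* U_{i₀} φ, φ⟩ ≤ 1 − ε²/2. Then ‖Σ_{i∈I} w_i U_i φ‖² ≤ (1 − ε²/(2 C² n²)) (Σ_{i∈I} w_i)². -/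
/-!
Expanding the square, `‖∑ wᵢ vᵢ‖² = ∑_{i,j} wᵢ wⱼ Re⟪vᵢ, vⱼ⟫` with unit vectors `vᵢ = Uᵢ φ`.
Every cross term is at most `wᵢ wⱼ`, and the term `(i₀, j₀)` loses `ε²/2 · wᵢ₀ wⱼ₀`. Flatness of
the weights gives `∑ w ≤ C n wₖ` for every `k`, so this loss is at least `ε²/(2 C² n²) (∑ w)²`.
-/

open Finset

theorem Finset.sum_le_sum_sub_of_le_sub {ι M : Type*} [AddCommGroup M] [PartialOrder M]
    [IsOrderedAddMonoid M] [DecidableEq ι] {s : Finset ι} {f g : ι → M} {a : ι} {d : M}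
    (ha : a ∈ s) (hfg : ∀ i ∈ s, f i ≤ g i) (hfga : f a ≤ g a - d) :
    ∑ i ∈ s, f i ≤ ∑ i ∈ s, g i - d := by
  rw [← add_sum_erase s f ha, ← add_sum_erase s g ha]
  have hrest : ∑ i ∈ s.erase a, f i ≤ ∑ i ∈ s.erase a, g i :=
    sum_le_sum fun i hi => hfg i (mem_of_mem_erase hi)
  calc f a + ∑ i ∈ s.erase a, f i ≤ (g a - d) + ∑ i ∈ s.erase a, g i := add_le_add hfga hrest
    _ = g a + ∑ i ∈ s.erase a, g i - d := by abel

section InnerProduct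

variable {𝕜 E ι : Type*} [RCLike 𝕜] [NormedAddCommGroup E] [InnerProductSpace 𝕜 E] [Fintype ι]

theorem norm_sum_ofReal_smul_sq (w : ι → ℝ) (v : ι → E) :
    ‖∑ i, (w i : 𝕜) • v i‖ ^ 2 = ∑ i, ∑ j, w i * w j * RCLike.re (inner 𝕜 (v i) (v j)) := by
  rw [← inner_self_eq_norm_sq (𝕜 := 𝕜)]
  simp only [sum_inner, inner_sum, inner_smul_left, inner_smul_right, RCLike.conj_ofReal,
    map_sum, RCLike.re_ofReal_mul, mul_sum, mul_assoc]
  rw [sum_comm]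
  simp only [mul_left_comm]

theorem norm_sum_ofReal_smul_sq_le_of_re_inner_le (w : ι → ℝ) (hw : ∀ i, 0 ≤ w i) (v : ι → E)
    (hv : ∀ i, ‖v i‖ ≤ 1) {i₀ j₀ : ι} {δ : ℝ}
    (hδ : RCLike.re (inner 𝕜 (v i₀) (v j₀)) ≤ 1 - δ) :
    ‖∑ i, (w i : 𝕜) • v i‖ ^ 2 ≤ (∑ i, w i) ^ 2 - δ * (w i₀ * w j₀) := by
  classical
  have hre (i j : ι) : RCLike.re (inner 𝕜 (v i) (v j)) ≤ 1 :=
    (re_inner_le_norm _ _).trans (mul_le_one₀ (hv i) (norm_nonneg _) (hv j))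
  rw [norm_sum_ofReal_smul_sq, sq, sum_mul_sum]
  simp only [← Fintype.sum_prod_type']
  refine sum_le_sum_sub_of_le_sub (mem_univ (i₀, j₀)) (fun p _ => ?_) ?_
  · exact mul_le_of_le_one_right (mul_nonneg (hw _) (hw _)) (hre _ _)
  · calc w i₀ * w j₀ * RCLike.re (inner 𝕜 (v i₀) (v j₀)) ≤ w i₀ * w j₀ * (1 - δ) :=
          mul_le_mul_of_nonneg_left hδ (mul_nonneg (hw _) (hw _))
      _ = w i₀ * w j₀ - δ * (w i₀ * w j₀) := by ring

end InnerProduct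

theorem sq_sum_le_of_le_mul {ι : Type*} [Fintype ι] (w : ι → ℝ) (hw : ∀ i, 0 ≤ w i) {C : ℝ}
    (hwC : ∀ i j, w i ≤ C * w j) (i j : ι) :
    (∑ k, w k) ^ 2 ≤ (C * Fintype.card ι) ^ 2 * (w i * w j) := by
  have hsum (j : ι) : ∑ k, w k ≤ C * Fintype.card ι * w j := by
    calc ∑ k, w k ≤ Fintype.card ι • (C * w j) := sum_le_card_nsmul _ _ _ fun k _ => hwC k j
      _ = C * Fintype.card ι * w j := by rw [nsmul_eq_mul]; ring
  have hS : 0 ≤ ∑ k, w k := sum_nonneg fun k _ => hw k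
  calc (∑ k, w k) ^ 2 = (∑ k, w k) * ∑ k, w k := sq _
    _ ≤ (C * Fintype.card ι * w i) * (C * Fintype.card ι * w j) :=
        mul_le_mul (hsum i) (hsum j) hS (hS.trans (hsum i))
    _ = (C * Fintype.card ι) ^ 2 * (w i * w j) := by ring

theorem stmt10_general (H : Type*) [NormedAddCommGroup H] [InnerProductSpace ℂ H]
    (I : Type*) [Fintype I]
    (U : I → (H ≃ₗᵢ[ℂ] H)) (w : I → ℝ) (hw : ∀ i, 0 < w i)
    (C : ℝ) (hwC : ∀ i j, w i ≤ C * w j)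
    (φ : H) (hφ : ‖φ‖ = 1) (ε : ℝ)
    (i₀ j₀ : I) (hij : (inner ℂ (U i₀ φ) (U j₀ φ) : ℂ).re ≤ 1 - ε ^ 2 / 2) :
    ‖∑ i : I, (w i : ℂ) • (U i φ)‖ ^ 2
      ≤ (1 - ε ^ 2 / (2 * C ^ 2 * (Fintype.card I : ℝ) ^ 2)) * (∑ i : I, w i) ^ 2 := by
  set K : ℝ := (C * Fintype.card I) ^ 2
  have hw0 (i : I) : 0 ≤ w i := (hw i).le
  have hdefect := norm_sum_ofReal_smul_sq_le_of_re_inner_le (𝕜 := ℂ) w hw0 (fun i => U i φ)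
    (fun i => by simp [hφ]) hij
  have hflat : (∑ i, w i) ^ 2 ≤ K * (w i₀ * w j₀) := sq_sum_le_of_le_mul w hw0 hwC i₀ j₀
  have hloss : ε ^ 2 / (2 * C ^ 2 * (Fintype.card I : ℝ) ^ 2) * (∑ i, w i) ^ 2
      ≤ ε ^ 2 / 2 * (w i₀ * w j₀) := by
    calc _ ≤ ε ^ 2 / (2 * C ^ 2 * (Fintype.card I : ℝ) ^ 2) * (K * (w i₀ * w j₀)) := by gcongr
      _ = ε ^ 2 / 2 * (K / K) * (w i₀ * w j₀) := by ring
      _ ≤ ε ^ 2 / 2 * (w i₀ * w j₀) := by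
          gcongr
          · exact mul_nonneg (hw0 _) (hw0 _)
          · exact mul_le_of_le_one_right (by positivity) (div_self_le_one K)
  calc ‖∑ i : I, (w i : ℂ) • (U i φ)‖ ^ 2 ≤ (∑ i, w i) ^ 2 - ε ^ 2 / 2 * (w i₀ * w j₀) := hdefect
    _ ≤ _ := by linarith

theorem stmt10 (H : Type*) [NormedAddCommGroup H] [InnerProductSpace ℂ H] [CompleteSpace H]
    (I : Type*) [Fintype I] [Nonempty I]
    (U : I → (H ≃ₗᵢ[ℂ] H)) (w : I → ℝ) (hw : ∀ i, 0 < w i)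
    (C : ℝ) (hC : 1 ≤ C) (hwC : ∀ i j, w i ≤ C * w j)
    (φ : H) (hφ : ‖φ‖ = 1) (ε : ℝ) (hε0 : 0 < ε) (hε1 : ε < 1)
    (i₀ j₀ : I) (hij : (inner ℂ (U i₀ φ) (U j₀ φ) : ℂ).re ≤ 1 - ε ^ 2 / 2) :
    ‖∑ i : I, (w i : ℂ) • (U i φ)‖ ^ 2
      ≤ (1 - ε ^ 2 / (2 * C ^ 2 * (Fintype.card I : ℝ) ^ 2)) * (∑ i : I, w i) ^ 2 :=
  stmt10_general H I U w hw C hwC φ hφ ε i₀ j₀ hij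
end
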